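/- arXiv:2204.02525 — 5 statements merged into one kernel-verified Lean document; each statement's English description precedes it below -/
import Mathlib

section
/- Let 𝒢 be a periodic evolving graph with period Γ on a finite vertex set V, let G(𝒢) be its emulated graph with extended path set P* = static(𝒫⁰), and let M = (m_{s,d}) be a demand matrix. Then for every legal temporal flow ℱ in 𝒢 achieving throughput θ for M there exists a legal flow F on P* in G(𝒢) achieving throughput θ for M, and conversely for every legal flow F on P* achieving throughput θ for M there exists a legal temporal flow ℱ in 𝒢 achieving throughput θ for M. Consequently, the supremum of throughputs achievable by legal temporal flows in 𝒢 equals the supremum of throughputs achievable by legal flows on P* in G(𝒢). -/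
open scoped ENNReal NNReal BigOperators

namespace RDCN

/-- A directed edge. -/
abbrev Edge (V : Type*) := V × V
/-- A temporal path (or a labelled-edge path): a list of edge/time(label) pairs. -/
abbrev TPath (V : Type*) := List (Edge V × ℕ)
/-- An extended path in the emulated graph: a labelled-edge path together with its
unique identifier (a temporal path). -/
abbrev ExtPath (V : Type*) := TPath V × TPath V

variable {V : Type*}

/-- The vertex sequence of a list of directed edges. -/
def pathVerts (es : List (Edge V)) : List V :=
  match es with
  | [] => []
  | e :: _ => e.1 :: es.map Prod.snd

/-- A nonempty list of directed edges forming a directed path visiting pairwise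
distinct vertices. -/
def IsSimpleEdgePath (es : List (Edge V)) : Prop :=
  es ≠ [] ∧ es.Chain' (fun e e' => e.2 = e'.1) ∧ (pathVerts es).Nodup

/-- `es` is a path from `s` to `d`. -/
def EndpointsOf (es : List (Edge V)) (s d : V) : Prop :=
  es.head?.map Prod.fst = some s ∧ es.getLast?.map Prod.snd = some d

/-- A periodic evolving graph with period `Γ`, timeslot duration `Δ` and
reconfiguration fraction `Δu`. -/
structure PEG (V : Type*) where
  Γ : ℕ
  Γ_pos : 1 ≤ Γ
  E : ℕ → Set (V × V)
  E_periodic : ∀ t, E (t + Γ) = E t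
  c : ℕ → V × V → ℝ≥0
  c_periodic : ∀ t e, c (t + Γ) e = c t e
  c_zero : ∀ t e, e ∉ E t → c t e = 0
  Δ : ℝ≥0
  Δ_pos : 0 < Δ
  Δu : ℝ≥0
  Δu_lt_one : Δu < 1

/-- A legal temporal path in the periodic evolving graph `G`. -/
def IsTemporalPath (G : PEG V) (δ : TPath V) : Prop :=
  δ ≠ [] ∧ (∀ x ∈ δ, x.1 ∈ G.E x.2) ∧
    δ.Chain' (fun x y => x.2 < y.2 ∧ y.2 ≤ x.2 + G.Γ) ∧
    IsSimpleEdgePath (δ.map Prod.fst)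

/-- The foundation set `𝒫⁰`: legal temporal paths starting in the first period. -/
def Foundation (G : PEG V) : Set (TPath V) :=
  {δ | IsTemporalPath G δ ∧ ∀ t₀ : ℕ, δ.head?.map Prod.snd = some t₀ → t₀ < G.Γ}

/-- The temporal path `δ` goes from `s` to `d`. -/
def TEndpoints (δ : TPath V) (s d : V) : Prop :=
  EndpointsOf (δ.map Prod.fst) s d

/-- `𝒫⁰_{s,d}`. -/
def FoundationSD (G : PEG V) (s d : V) : Set (TPath V) :=
  {δ | δ ∈ Foundation G ∧ TEndpoints δ s d}

/-- Shift all times of a temporal path by `k·Γ`. -/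
def shiftPath (Γ k : ℕ) (δ : TPath V) : TPath V :=
  δ.map fun x => (x.1, x.2 + k * Γ)

/-- `𝒫*`: all periodic shifts of foundation paths. -/
def PStar (G : PEG V) : Set (TPath V) :=
  {δ' | ∃ δ ∈ Foundation G, ∃ k : ℕ, δ' = shiftPath G.Γ k δ}

/-- `𝒫*_{s,d}`. -/
def PStarSD (G : PEG V) (s d : V) : Set (TPath V) :=
  {δ | δ ∈ PStar G ∧ TEndpoints δ s d}

/-- A legal temporal flow: nonnegative (enforced by `ℝ≥0`), invariant under
shifting a path's times by `Γ`, and obeying the capacity constraints at all times. -/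
structure IsLegalTemporalFlow (G : PEG V) (F : TPath V → ℝ≥0) : Prop where
  periodic : ∀ δ ∈ PStar G, F (shiftPath G.Γ 1 δ) = F δ
  capacity : ∀ (e : Edge V) (t : ℕ),
    ∑' δ : {δ : TPath V // δ ∈ PStar G ∧ (e, t) ∈ δ}, ((F (δ : TPath V) : ℝ≥0) : ℝ≥0∞)
      ≤ (G.c t e : ℝ≥0∞)

/-- The factor `(1-Δu)/Γ`. -/
noncomputable def capFactor (G : PEG V) : ℝ≥0∞ :=
  ((1 - G.Δu : ℝ≥0) : ℝ≥0∞) / (G.Γ : ℝ≥0∞)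

/-- The temporal flow `F` achieves throughput `θ` for the demand matrix `m`:
`((1-Δu)/Γ)·Σ_{δ ∈ 𝒫⁰_{s,d}} F(δ) ≥ θ·m_{s,d}` for all `s, d`. -/
def AchievesThroughputT (G : PEG V) (F : TPath V → ℝ≥0) (m : V → V → ℝ≥0)
    (θ : ℝ≥0∞) : Prop :=
  ∀ s d : V, θ * (m s d : ℝ≥0∞) ≤
    capFactor G * ∑' δ : FoundationSD G s d, ((F (δ : TPath V) : ℝ≥0) : ℝ≥0∞)

/-- Capacity `ĉ(e,ℓ) = ((1-Δu)/Γ)·c_ℓ(e)` of a labelled edge of the emulated graph. -/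
noncomputable def chat (G : PEG V) (e : Edge V) (ℓ : ℕ) : ℝ≥0∞ :=
  capFactor G * (G.c ℓ e : ℝ≥0∞)

/-- The map `static` sending a temporal path `δ = ⟨(eᵢ,tᵢ)⟩` to the extended path
`(⟨(eᵢ, tᵢ mod Γ)⟩, δ)` with `δ` as the unique identifier. -/
def staticOf (Γ : ℕ) (δ : TPath V) : ExtPath V :=
  (δ.map fun x => (x.1, x.2 % Γ), δ)

/-- `P* = static(𝒫⁰)`, the extended path set of the emulated graph. -/
def PStarStatic (G : PEG V) : Set (ExtPath V) :=
  staticOf G.Γ '' Foundation G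

/-- The extended path `p` goes from `s` to `d`. -/
def SEndpoints (p : ExtPath V) (s d : V) : Prop :=
  EndpointsOf (p.1.map Prod.fst) s d

/-- A legal flow on a set `P` of extended paths of the emulated graph: equal on paths
with identical labelled-edge sequences, and obeying the capacity constraints. -/
structure IsLegalStaticFlow (G : PEG V) (P : Set (ExtPath V)) (F : ExtPath V → ℝ≥0) :
    Prop where
  congr : ∀ p ∈ P, ∀ q ∈ P, p.1 = q.1 → F p = F q
  capacity : ∀ (e : Edge V) (ℓ : ℕ), ℓ < G.Γ →
    ∑' p : {p : ExtPath V // p ∈ P ∧ (e, ℓ) ∈ p.1}, ((F (p : ExtPath V) : ℝ≥0) : ℝ≥0∞)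
      ≤ chat G e ℓ

/-- The flow `F` on the extended path set `P` achieves throughput `θ` for `m`:
`Σ_{p ∈ P_{s,d}} F(p) ≥ θ·m_{s,d}` for all `s, d`. -/
def AchievesThroughputS (P : Set (ExtPath V)) (F : ExtPath V → ℝ≥0) (m : V → V → ℝ≥0)
    (θ : ℝ≥0∞) : Prop :=
  ∀ s d : V, θ * (m s d : ℝ≥0∞) ≤
    ∑' p : {p : ExtPath V // p ∈ P ∧ SEndpoints p s d}, ((F (p : ExtPath V) : ℝ≥0) : ℝ≥0∞)

/-- First time of a temporal path. -/
def tStart (δ : TPath V) : ℕ := (δ.head?.map Prod.snd).getD 0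
/-- Last time of a temporal path. -/
def tEnd (δ : TPath V) : ℕ := (δ.getLast?.map Prod.snd).getD 0

/-- The delay `L(δ) = (t_n − t₁ + 1)·Δ + (Γ−1)·Δ` of a temporal path. -/
noncomputable def delay (G : PEG V) (δ : TPath V) : ℝ≥0∞ :=
  ((tEnd δ - tStart δ + 1 : ℕ) : ℝ≥0∞) * (G.Δ : ℝ≥0∞) +
    ((G.Γ - 1 : ℕ) : ℝ≥0∞) * (G.Δ : ℝ≥0∞)

/-- `Σ_{δ ∈ 𝒫⁰_{s,d}} F(δ)`. -/
noncomputable def sdSum (G : PEG V) (F : TPath V → ℝ≥0) (s d : V) : ℝ≥0∞ :=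
  ∑' δ : FoundationSD G s d, ((F (δ : TPath V) : ℝ≥0) : ℝ≥0∞)

/-- `r_δ = F(δ)/Σ_{δ' ∈ 𝒫⁰_{s,d}} F(δ')` (with value `0` when the denominator is `0`,
which holds automatically since then `F(δ) = 0` for `δ ∈ 𝒫⁰_{s,d}`). -/
noncomputable def rfrac (G : PEG V) (F : TPath V → ℝ≥0) (s d : V) (δ : TPath V) : ℝ≥0∞ :=
  ((F δ : ℝ≥0) : ℝ≥0∞) / sdSum G F s d

/-- Total demand `M_tot = Σ_{s,d} m_{s,d}`. -/
noncomputable def Mtot [Fintype V] (m : V → V → ℝ≥0) : ℝ≥0∞ :=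
  ∑ s : V, ∑ d : V, (m s d : ℝ≥0∞)

/-- Average route delay `ARD(M,F) = Σ_{s,d} (m_{s,d}/M_tot)·Σ_{δ ∈ 𝒫⁰_{s,d}} r_δ·L(δ)`. -/
noncomputable def ARD [Fintype V] (G : PEG V) (F : TPath V → ℝ≥0) (m : V → V → ℝ≥0) :
    ℝ≥0∞ :=
  ∑ s : V, ∑ d : V, ((m s d : ℝ≥0∞) / Mtot m) *
    ∑' δ : FoundationSD G s d, rfrac G F s d (δ : TPath V) * delay G (δ : TPath V)

/-- Average route length
`ARL(M,F) = Σ_{s,d} Σ_{δ ∈ 𝒫⁰_{s,d}} (m_{s,d}/M_tot)·r_δ·len(δ)`. -/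
noncomputable def ARLt [Fintype V] (G : PEG V) (F : TPath V → ℝ≥0) (m : V → V → ℝ≥0) :
    ℝ≥0∞ :=
  ∑ s : V, ∑ d : V, ∑' δ : FoundationSD G s d,
    ((m s d : ℝ≥0∞) / Mtot m) * rfrac G F s d (δ : TPath V) * ((δ : TPath V).length : ℝ≥0∞)

/-!
On the foundation set `𝒫⁰` the labelled-edge sequence of `static(δ)` determines `δ`: the labels
`tᵢ mod Γ` together with `t₁ < Γ` and `tᵢ < tᵢ₊₁ ≤ tᵢ + Γ` recover every time of the path. So a
temporal flow restricted to `𝒫⁰` and scaled by `(1-Δu)/Γ` is a static flow with the same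
throughput, and conversely a static flow, unscaled and extended periodically to `𝒫*`, is a
temporal flow.

Capacities transfer because a path uses each edge at most once. Each shift of a foundation
path through `(e, t)` comes from a distinct element of `P*` through `(e, t mod Γ)`. Conversely,
since a foundation path has fewer than `|V|` edges, all its times are below `Γ·|V|`, so every
foundation path through `(e, ℓ)` has exactly one shift through `(e, ℓ + |V|·Γ)`, and the
capacity at that single time bounds the whole sum.
-/

theorem tsum_le_tsum_of_rel_injective {α β : Type*} {f : α → ℝ≥0∞} {g : β → ℝ≥0∞}
    (r : α → β → Prop) (h : ∀ a, ∃ b, r a b ∧ f a ≤ g b)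
    (hr : ∀ a a' b, r a b → r a' b → a = a') : ∑' a, f a ≤ ∑' b, g b := by
  choose ι hι using h
  calc ∑' a, f a ≤ ∑' a, g (ι a) := ENNReal.tsum_le_tsum fun a => (hι a).2
    _ ≤ ∑' b, g b :=
      ENNReal.tsum_comp_le_tsum_of_injective
        (fun a a' (haa' : ι a = ι a') => hr a a' _ (hι a).1 (haa' ▸ (hι a').1)) g

theorem eq_of_modEq_of_mem_Ioc {Γ t a b : ℕ} (h : a ≡ b [MOD Γ]) (ha : a ∈ Set.Ioc t (t + Γ))
    (hb : b ∈ Set.Ioc t (t + Γ)) : a = b := by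
  obtain ⟨a', rfl⟩ := Nat.exists_eq_add_of_lt ha.1
  obtain ⟨b', rfl⟩ := Nat.exists_eq_add_of_lt hb.1
  have h' : a' ≡ b' [MOD Γ] :=
    Nat.ModEq.add_left_cancel' (t + 1) (by rwa [add_right_comm t a', add_right_comm t b'] at h)
  have := h'.eq_of_lt_of_lt (by simp at ha; omega) (by simp at hb; omega)
  omega

theorem shiftPath_zero (Γ : ℕ) (δ : TPath V) : shiftPath Γ 0 δ = δ := by
  simp [shiftPath]

theorem shiftPath_shiftPath (Γ k j : ℕ) (δ : TPath V) :
    shiftPath Γ j (shiftPath Γ k δ) = shiftPath Γ (k + j) δ := by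
  simp only [shiftPath, List.map_map, Function.comp_def, add_mul, add_assoc]

theorem mem_shiftPath {Γ k : ℕ} {δ : TPath V} {e : Edge V} {t : ℕ} :
    (e, t) ∈ shiftPath Γ k δ ↔ ∃ t₀, (e, t₀) ∈ δ ∧ t = t₀ + k * Γ := by
  constructor
  · intro h
    obtain ⟨⟨e₀, t₀⟩, hmem, hx⟩ := List.mem_map.mp h
    simp only [Prod.mk.injEq] at hx
    exact ⟨t₀, hx.1 ▸ hmem, hx.2.symm⟩
  · rintro ⟨t₀, hmem, rfl⟩
    exact List.mem_map.mpr ⟨(e, t₀), hmem, rfl⟩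

theorem tStart_shiftPath {Γ k : ℕ} {δ : TPath V} (hδ : δ ≠ []) :
    tStart (shiftPath Γ k δ) = tStart δ + k * Γ := by
  obtain ⟨x, xs, rfl⟩ := List.exists_cons_of_ne_nil hδ
  rfl

theorem mem_staticOf_fst {Γ : ℕ} {δ : TPath V} {e : Edge V} {ℓ : ℕ} :
    (e, ℓ) ∈ (staticOf Γ δ).1 ↔ ∃ t, (e, t) ∈ δ ∧ t % Γ = ℓ := by
  constructor
  · intro h
    obtain ⟨⟨e₀, t⟩, hmem, hx⟩ := List.mem_map.mp h
    simp only [Prod.mk.injEq] at hx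
    exact ⟨t, hx.1 ▸ hmem, hx.2⟩
  · rintro ⟨t, hmem, rfl⟩
    exact List.mem_map.mpr ⟨(e, t), hmem, rfl⟩

theorem staticOf_injective (Γ : ℕ) : Function.Injective (staticOf (V := V) Γ) :=
  fun _ _ h => congrArg Prod.snd h

theorem PEG.c_add_mul (G : PEG V) (t k : ℕ) (e : Edge V) : G.c (t + k * G.Γ) e = G.c t e := by
  induction k with
  | zero => simp
  | succ k ih => rw [add_one_mul, ← add_assoc, G.c_periodic, ih]

theorem PEG.c_mod (G : PEG V) (t : ℕ) (e : Edge V) : G.c (t % G.Γ) e = G.c t e := by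
  rw [← G.c_add_mul (t % G.Γ) (t / G.Γ), Nat.mod_add_div']

theorem IsSimpleEdgePath.nodup {es : List (Edge V)} (h : IsSimpleEdgePath es) : es.Nodup := by
  obtain ⟨hne, -, hnd⟩ := h
  obtain ⟨e, es', rfl⟩ := List.exists_cons_of_ne_nil hne
  exact (List.nodup_cons.mp hnd).2.of_map

theorem IsSimpleEdgePath.length_lt_card [Fintype V] {es : List (Edge V)}
    (h : IsSimpleEdgePath es) : es.length < Fintype.card V := by
  obtain ⟨hne, -, hnd⟩ := h
  obtain ⟨e, es', rfl⟩ := List.exists_cons_of_ne_nil hne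
  simpa [pathVerts] using hnd.length_le_card

theorem IsTemporalPath.eq_of_mem {G : PEG V} {δ : TPath V} (hδ : IsTemporalPath G δ)
    {e : Edge V} {t t' : ℕ} (h : (e, t) ∈ δ) (h' : (e, t') ∈ δ) : t = t' :=
  congrArg Prod.snd (List.inj_on_of_nodup_map hδ.2.2.2.nodup h h' rfl)

theorem lt_add_mul_length_of_isChain {α : Type*} {Γ B : ℕ} :
    ∀ {l : List (α × ℕ)}, l.IsChain (fun x y => y.2 ≤ x.2 + Γ) →
      (∀ x ∈ l.head?, x.2 < B) → ∀ x ∈ l, x.2 < B + Γ * l.length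
  | [], _, _, _, hx => by simp at hx
  | a :: l, hc, hB, x, hx => by
    obtain ⟨hstep, hc⟩ := List.isChain_cons.mp hc
    have ha : a.2 < B := hB a rfl
    rcases List.mem_cons.mp hx with rfl | hx
    · exact lt_add_of_lt_of_nonneg ha (Nat.zero_le _)
    · have := lt_add_mul_length_of_isChain (B := B + Γ) hc
        (fun y hy => by have := hstep y hy; omega) x hx
      simp only [List.length_cons]
      linarith

theorem tStart_lt_of_mem_foundation {G : PEG V} {δ : TPath V} (hδ : δ ∈ Foundation G) :
    tStart δ < G.Γ := by
  cases δ with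
  | nil => exact G.Γ_pos
  | cons x xs => exact hδ.2 x.2 rfl

theorem lt_of_mem_foundation [Fintype V] {G : PEG V} {δ : TPath V} (hδ : δ ∈ Foundation G)
    {x : Edge V × ℕ} (hx : x ∈ δ) : x.2 < G.Γ * Fintype.card V := by
  have hlen : δ.length < Fintype.card V := by
    simpa using hδ.1.2.2.2.length_lt_card
  have hx := lt_add_mul_length_of_isChain (B := G.Γ) (hδ.1.2.2.1.imp fun _ _ h => h.2)
    (fun y hy => hδ.2 y.2 (by rw [Option.mem_def.mp hy]; rfl)) x hx
  calc x.2 < G.Γ + G.Γ * δ.length := hx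
    _ = G.Γ * (δ.length + 1) := by ring
    _ ≤ G.Γ * Fintype.card V := Nat.mul_le_mul_left _ hlen

theorem eq_of_map_mod_eq {α : Type*} {Γ : ℕ} :
    ∀ {l l' : List (α × ℕ)}, l.IsChain (fun x y => x.2 < y.2 ∧ y.2 ≤ x.2 + Γ) →
      l'.IsChain (fun x y => x.2 < y.2 ∧ y.2 ≤ x.2 + Γ) → l.head? = l'.head? →
      l.map (fun x => (x.1, x.2 % Γ)) = l'.map (fun x => (x.1, x.2 % Γ)) → l = l'
  | [], [], _, _, _, _ => rfl
  | [x], [y], _, _, hhead, _ => by simpa using hhead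
  | x :: a :: l, y :: b :: l', hc, hc', hhead, hmap => by
    obtain rfl : x = y := by simpa using hhead
    simp only [List.map_cons, List.cons.injEq, Prod.mk.injEq] at hmap
    have hab : a = b := Prod.ext hmap.2.1.1 <| eq_of_modEq_of_mem_Ioc hmap.2.1.2
      (List.isChain_cons_cons.mp hc).1 (List.isChain_cons_cons.mp hc').1
    have htail : a :: l = b :: l' := eq_of_map_mod_eq hc.tail hc'.tail (by simp [hab])
      (by simp only [List.map_cons, hmap.2.1, hmap.2.2])
    rw [htail]
  | [], _ :: _, _, _, _, hmap | _ :: _, [], _, _, _, hmap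
  | [_], _ :: _ :: _, _, _, _, hmap | _ :: _ :: _, [_], _, _, _, hmap => by simp at hmap

theorem eq_of_staticOf_fst_eq {G : PEG V} {δ δ' : TPath V} (hδ : δ ∈ Foundation G)
    (hδ' : δ' ∈ Foundation G) (h : (staticOf G.Γ δ).1 = (staticOf G.Γ δ').1) : δ = δ' := by
  refine eq_of_map_mod_eq hδ.1.2.2.1 hδ'.1.2.2.1 ?_ h
  obtain ⟨x, xs, rfl⟩ := List.exists_cons_of_ne_nil hδ.1.1
  obtain ⟨y, ys, rfl⟩ := List.exists_cons_of_ne_nil hδ'.1.1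
  simp only [staticOf, List.map_cons, List.cons.injEq, Prod.mk.injEq] at h
  rw [Nat.mod_eq_of_lt (hδ.2 x.2 rfl), Nat.mod_eq_of_lt (hδ'.2 y.2 rfl)] at h
  exact congrArg some (Prod.ext h.1.1 h.1.2)

/-- Moving a path back by whole periods until its first time lies in `[0, Γ)`. -/
def foundationRep (Γ : ℕ) (δ : TPath V) : TPath V :=
  δ.map fun x => (x.1, x.2 - tStart δ / Γ * Γ)

theorem foundationRep_shiftPath {G : PEG V} {δ : TPath V} (hδ : δ ∈ Foundation G) (k : ℕ) :
    foundationRep G.Γ (shiftPath G.Γ k δ) = δ := by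
  have hk : tStart (shiftPath G.Γ k δ) / G.Γ = k := by
    rw [tStart_shiftPath hδ.1.1, Nat.add_mul_div_right _ _ G.Γ_pos,
      Nat.div_eq_of_lt (tStart_lt_of_mem_foundation hδ), zero_add]
  rw [foundationRep, hk, shiftPath, List.map_map]
  conv_rhs => rw [← List.map_id δ]
  exact List.map_congr_left fun x _ => by simp

theorem eq_of_shiftPath_eq {G : PEG V} {δ δ' : TPath V} (hδ : δ ∈ Foundation G)
    (hδ' : δ' ∈ Foundation G) {k k' : ℕ} (h : shiftPath G.Γ k δ = shiftPath G.Γ k' δ') :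
    δ = δ' := by
  rw [← foundationRep_shiftPath hδ k, h, foundationRep_shiftPath hδ' k']

theorem shiftPath_mem_pStar {G : PEG V} {δ : TPath V} (hδ : δ ∈ Foundation G) (k : ℕ) :
    shiftPath G.Γ k δ ∈ PStar G :=
  ⟨δ, hδ, k, rfl⟩

theorem mem_pStarStatic_iff {G : PEG V} {p : ExtPath V} :
    p ∈ PStarStatic G ↔ p.2 ∈ Foundation G ∧ staticOf G.Γ p.2 = p := by
  constructor
  · rintro ⟨δ, hδ, rfl⟩
    exact ⟨hδ, rfl⟩
  · rintro ⟨hδ, hp⟩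
    exact ⟨p.2, hδ, hp⟩

theorem IsLegalTemporalFlow.apply_shiftPath {G : PEG V} {F : TPath V → ℝ≥0}
    (hF : IsLegalTemporalFlow G F) {δ : TPath V} (hδ : δ ∈ Foundation G) (k : ℕ) :
    F (shiftPath G.Γ k δ) = F δ := by
  induction k with
  | zero => rw [shiftPath_zero]
  | succ k ih => rw [← shiftPath_shiftPath, hF.periodic _ (shiftPath_mem_pStar hδ k), ih]

theorem PEG.Γ_ne_zero (G : PEG V) : G.Γ ≠ 0 :=
  Nat.one_le_iff_ne_zero.mp G.Γ_pos

noncomputable def capFactorNNReal (G : PEG V) : ℝ≥0 :=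
  (1 - G.Δu) / G.Γ

theorem capFactorNNReal_ne_zero (G : PEG V) : capFactorNNReal G ≠ 0 :=
  div_ne_zero (tsub_pos_of_lt G.Δu_lt_one).ne' (Nat.cast_ne_zero.mpr G.Γ_ne_zero)

theorem coe_capFactorNNReal (G : PEG V) : (capFactorNNReal G : ℝ≥0∞) = capFactor G := by
  rw [capFactorNNReal, capFactor, ENNReal.coe_div (Nat.cast_ne_zero.mpr G.Γ_ne_zero)]
  norm_cast

theorem sEndpoints_staticOf {Γ : ℕ} {δ : TPath V} {s d : V} :
    SEndpoints (staticOf Γ δ) s d ↔ TEndpoints δ s d := by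
  simp [SEndpoints, TEndpoints, staticOf, List.map_map, Function.comp_def]

def foundationSDEquiv (G : PEG V) (s d : V) :
    FoundationSD G s d ≃ {p : ExtPath V // p ∈ PStarStatic G ∧ SEndpoints p s d} where
  toFun δ := ⟨staticOf G.Γ δ, ⟨δ, δ.2.1, rfl⟩, sEndpoints_staticOf.mpr δ.2.2⟩
  invFun p := ⟨p.1.2, (mem_pStarStatic_iff.mp p.2.1).1,
    sEndpoints_staticOf.mp (((mem_pStarStatic_iff.mp p.2.1).2).symm ▸ p.2.2)⟩
  left_inv _ := rfl
  right_inv p := Subtype.ext (mem_pStarStatic_iff.mp p.2.1).2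

theorem tsum_pStarStatic_sEndpoints (G : PEG V) (s d : V) (f : ExtPath V → ℝ≥0∞) :
    ∑' p : {p : ExtPath V // p ∈ PStarStatic G ∧ SEndpoints p s d}, f p =
      ∑' δ : FoundationSD G s d, f (staticOf G.Γ δ) :=
  ((foundationSDEquiv G s d).tsum_eq (fun p => f p)).symm

noncomputable def staticFlowOf (G : PEG V) (F : TPath V → ℝ≥0) : ExtPath V → ℝ≥0 :=
  fun p => capFactorNNReal G * F p.2

theorem isLegalStaticFlow_staticFlowOf [Fintype V] {G : PEG V} {F : TPath V → ℝ≥0}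
    (hF : IsLegalTemporalFlow G F) : IsLegalStaticFlow G (PStarStatic G) (staticFlowOf G F) where
  congr := by
    rintro _ ⟨δ, hδ, rfl⟩ _ ⟨δ', hδ', rfl⟩ h
    rw [eq_of_staticOf_fst_eq hδ hδ' h]
  capacity e ℓ _ := by
    set T := ℓ + Fintype.card V * G.Γ with hT_def
    have hshift : ∀ p : {p : ExtPath V // p ∈ PStarStatic G ∧ (e, ℓ) ∈ p.1},
        ∃ δ : {δ : TPath V // δ ∈ PStar G ∧ (e, T) ∈ δ},
          (∃ k, δ.1 = shiftPath G.Γ k p.1.2) ∧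
          ((staticFlowOf G F p : ℝ≥0) : ℝ≥0∞) ≤ capFactorNNReal G * F δ := by
      rintro ⟨_, ⟨δ, hδ, rfl⟩, he⟩
      obtain ⟨t, ht, rfl⟩ := mem_staticOf_fst.mp he
      have hq : t / G.Γ ≤ Fintype.card V :=
        (Nat.div_lt_iff_lt_mul G.Γ_pos).mpr (by rw [mul_comm]; exact lt_of_mem_foundation hδ ht)
          |>.le
      have hT : T = t + (Fintype.card V - t / G.Γ) * G.Γ := by
        have h1 := Nat.mod_add_div' t G.Γ
        have h2 : (Fintype.card V - t / G.Γ) * G.Γ + t / G.Γ * G.Γ = Fintype.card V * G.Γ := by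
          rw [← add_mul, Nat.sub_add_cancel hq]
        rw [hT_def]
        linarith
      refine ⟨⟨shiftPath G.Γ (Fintype.card V - t / G.Γ) δ, shiftPath_mem_pStar hδ _,
        mem_shiftPath.mpr ⟨t, ht, hT⟩⟩, ⟨_, rfl⟩, ?_⟩
      simp [staticFlowOf, staticOf, hF.apply_shiftPath hδ]
    calc ∑' p : {p : ExtPath V // p ∈ PStarStatic G ∧ (e, ℓ) ∈ p.1},
          ((staticFlowOf G F p : ℝ≥0) : ℝ≥0∞)
        ≤ ∑' δ : {δ : TPath V // δ ∈ PStar G ∧ (e, T) ∈ δ},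
            (capFactorNNReal G : ℝ≥0∞) * F δ := by
          refine tsum_le_tsum_of_rel_injective (fun p δ => ∃ k, δ.1 = shiftPath G.Γ k p.1.2)
            hshift ?_
          intro p p' b ⟨k, hk⟩ ⟨k', hk'⟩
          obtain ⟨hp, hp_eq⟩ := mem_pStarStatic_iff.mp p.2.1
          obtain ⟨hp', hp'_eq⟩ := mem_pStarStatic_iff.mp p'.2.1
          rw [Subtype.ext_iff, ← hp_eq, ← hp'_eq, eq_of_shiftPath_eq hp hp' (hk.symm.trans hk')]
      _ = capFactor G * ∑' δ : {δ : TPath V // δ ∈ PStar G ∧ (e, T) ∈ δ}, (F δ : ℝ≥0∞) := by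
          rw [ENNReal.tsum_mul_left, coe_capFactorNNReal]
      _ ≤ chat G e ℓ := by
          rw [chat, ← G.c_add_mul ℓ (Fintype.card V)]
          exact mul_le_mul_right (hF.capacity e T) _

theorem achievesThroughputS_staticFlowOf {G : PEG V} {F : TPath V → ℝ≥0} {m : V → V → ℝ≥0}
    {θ : ℝ≥0∞} (hT : AchievesThroughputT G F m θ) :
    AchievesThroughputS (PStarStatic G) (staticFlowOf G F) m θ := by
  intro s d
  rw [tsum_pStarStatic_sEndpoints G s d fun p => (staticFlowOf G F p : ℝ≥0∞)]
  simpa [staticFlowOf, staticOf, ENNReal.tsum_mul_left, coe_capFactorNNReal] using hT s d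

noncomputable def temporalFlowOf (G : PEG V) (F' : ExtPath V → ℝ≥0) : TPath V → ℝ≥0 :=
  fun δ => F' (staticOf G.Γ (foundationRep G.Γ δ)) / capFactorNNReal G

theorem temporalFlowOf_shiftPath {G : PEG V} {F' : ExtPath V → ℝ≥0} {δ : TPath V}
    (hδ : δ ∈ Foundation G) (k : ℕ) :
    temporalFlowOf G F' (shiftPath G.Γ k δ) = F' (staticOf G.Γ δ) / capFactorNNReal G := by
  rw [temporalFlowOf, foundationRep_shiftPath hδ]

theorem temporalFlowOf_of_mem_foundation {G : PEG V} {F' : ExtPath V → ℝ≥0} {δ : TPath V}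
    (hδ : δ ∈ Foundation G) :
    temporalFlowOf G F' δ = F' (staticOf G.Γ δ) / capFactorNNReal G := by
  simpa [shiftPath_zero] using temporalFlowOf_shiftPath (F' := F') hδ 0

theorem IsTemporalPath.eq_of_mem_shiftPath {G : PEG V} {δ : TPath V} (hδ : IsTemporalPath G δ)
    {e : Edge V} {t k k' : ℕ} (h : (e, t) ∈ shiftPath G.Γ k δ)
    (h' : (e, t) ∈ shiftPath G.Γ k' δ) : k = k' := by
  obtain ⟨t₀, ht₀, rfl⟩ := mem_shiftPath.mp h
  obtain ⟨t₁, ht₁, heq⟩ := mem_shiftPath.mp h'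
  rw [hδ.eq_of_mem ht₀ ht₁, add_left_cancel_iff] at heq
  exact Nat.eq_of_mul_eq_mul_right G.Γ_pos heq

theorem isLegalTemporalFlow_temporalFlowOf {G : PEG V} {F' : ExtPath V → ℝ≥0}
    (hF : IsLegalStaticFlow G (PStarStatic G) F') :
    IsLegalTemporalFlow G (temporalFlowOf G F') where
  periodic := by
    rintro _ ⟨δ, hδ, k, rfl⟩
    rw [shiftPath_shiftPath, temporalFlowOf_shiftPath hδ, temporalFlowOf_shiftPath hδ]
  capacity e t := by
    have hstatic : ∀ δ : {δ : TPath V // δ ∈ PStar G ∧ (e, t) ∈ δ},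
        ∃ p : {p : ExtPath V // p ∈ PStarStatic G ∧ (e, t % G.Γ) ∈ p.1},
          p.1 = staticOf G.Γ (foundationRep G.Γ δ) ∧
          ((temporalFlowOf G F' δ : ℝ≥0) : ℝ≥0∞) ≤ (F' p / capFactorNNReal G : ℝ≥0) := by
      rintro ⟨_, ⟨δ, hδ, k, rfl⟩, he⟩
      obtain ⟨t₀, ht₀, rfl⟩ := mem_shiftPath.mp he
      refine ⟨⟨staticOf G.Γ δ, ⟨δ, hδ, rfl⟩, mem_staticOf_fst.mpr ⟨t₀, ht₀, ?_⟩⟩, ?_, ?_⟩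
      · exact (Nat.add_mul_mod_self_right t₀ k G.Γ).symm
      · rw [foundationRep_shiftPath hδ]
      · rw [temporalFlowOf_shiftPath hδ]
    calc ∑' δ : {δ : TPath V // δ ∈ PStar G ∧ (e, t) ∈ δ},
          ((temporalFlowOf G F' δ : ℝ≥0) : ℝ≥0∞)
        ≤ ∑' p : {p : ExtPath V // p ∈ PStarStatic G ∧ (e, t % G.Γ) ∈ p.1},
            ((F' p / capFactorNNReal G : ℝ≥0) : ℝ≥0∞) := by
          refine tsum_le_tsum_of_rel_injective
            (fun δ p => p.1 = staticOf G.Γ (foundationRep G.Γ δ)) hstatic ?_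
          rintro ⟨_, ⟨δ, hδ, k, rfl⟩, he⟩ ⟨_, ⟨δ', hδ', k', rfl⟩, he'⟩ p hp hp'
          rw [foundationRep_shiftPath hδ] at hp
          rw [foundationRep_shiftPath hδ'] at hp'
          obtain rfl : δ = δ' := staticOf_injective G.Γ (hp.symm.trans hp')
          obtain rfl := hδ.1.eq_of_mem_shiftPath he he'
          rfl
      _ = (∑' p : {p : ExtPath V // p ∈ PStarStatic G ∧ (e, t % G.Γ) ∈ p.1},
            (F' p : ℝ≥0∞)) / capFactor G := by
          simp_rw [ENNReal.coe_div (capFactorNNReal_ne_zero G), coe_capFactorNNReal]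
          simp only [div_eq_mul_inv, ENNReal.tsum_mul_right]
      _ ≤ G.c t e := by
          rw [← G.c_mod]
          exact ENNReal.div_le_of_le_mul' (hF.capacity e _ (Nat.mod_lt t G.Γ_pos))

theorem achievesThroughputT_temporalFlowOf {G : PEG V} {F' : ExtPath V → ℝ≥0}
    {m : V → V → ℝ≥0} {θ : ℝ≥0∞} (hT : AchievesThroughputS (PStarStatic G) F' m θ) :
    AchievesThroughputT G (temporalFlowOf G F') m θ := by
  intro s d
  calc θ * m s d
      ≤ ∑' δ : FoundationSD G s d, (F' (staticOf G.Γ δ) : ℝ≥0∞) :=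
        tsum_pStarStatic_sEndpoints G s d (fun p => (F' p : ℝ≥0∞)) ▸ hT s d
    _ = capFactorNNReal G * ∑' δ : FoundationSD G s d,
          (F' (staticOf G.Γ δ) : ℝ≥0∞) / capFactorNNReal G := by
        simp only [div_eq_mul_inv, ENNReal.tsum_mul_right]
        rw [← div_eq_mul_inv, ENNReal.mul_div_cancel
          (ENNReal.coe_ne_zero.mpr (capFactorNNReal_ne_zero G)) ENNReal.coe_ne_top]
    _ = capFactor G * ∑' δ : FoundationSD G s d, (temporalFlowOf G F' δ : ℝ≥0∞) := by
        rw [← coe_capFactorNNReal]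
        congr 1
        refine tsum_congr fun δ => ?_
        rw [temporalFlowOf_of_mem_foundation δ.2.1, ENNReal.coe_div (capFactorNNReal_ne_zero G)]

theorem statement0_general {V : Type*} [Fintype V] (G : PEG V)
    (m : V → V → ℝ≥0) :
    (∀ (F : TPath V → ℝ≥0) (θ : ℝ≥0∞), IsLegalTemporalFlow G F →
      AchievesThroughputT G F m θ →
      ∃ F' : ExtPath V → ℝ≥0, IsLegalStaticFlow G (PStarStatic G) F' ∧
        AchievesThroughputS (PStarStatic G) F' m θ) ∧
    (∀ (F' : ExtPath V → ℝ≥0) (θ : ℝ≥0∞), IsLegalStaticFlow G (PStarStatic G) F' →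
      AchievesThroughputS (PStarStatic G) F' m θ →
      ∃ F : TPath V → ℝ≥0, IsLegalTemporalFlow G F ∧ AchievesThroughputT G F m θ) ∧
    sSup {θ : ℝ≥0∞ | ∃ F : TPath V → ℝ≥0,
        IsLegalTemporalFlow G F ∧ AchievesThroughputT G F m θ} =
      sSup {θ : ℝ≥0∞ | ∃ F' : ExtPath V → ℝ≥0,
        IsLegalStaticFlow G (PStarStatic G) F' ∧
          AchievesThroughputS (PStarStatic G) F' m θ} := by
  refine ⟨fun F _ hF hT => ⟨_, isLegalStaticFlow_staticFlowOf hF,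
      achievesThroughputS_staticFlowOf hT⟩,
    fun F' _ hF hT => ⟨_, isLegalTemporalFlow_temporalFlowOf hF,
      achievesThroughputT_temporalFlowOf hT⟩,
    congrArg sSup (Set.ext fun θ => ⟨?_, ?_⟩)⟩
  · rintro ⟨F, hF, hT⟩
    exact ⟨_, isLegalStaticFlow_staticFlowOf hF, achievesThroughputS_staticFlowOf hT⟩
  · rintro ⟨F', hF, hT⟩
    exact ⟨_, isLegalTemporalFlow_temporalFlowOf hF, achievesThroughputT_temporalFlowOf hT⟩

/-- Theorem: Relation to Emulated Graph.
For a periodic evolving graph `G` and a demand matrix `m`: every legal temporal flow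
achieving throughput `θ` can be converted to a legal flow on `P* = static(𝒫⁰)` in the
emulated graph achieving throughput `θ`, and vice versa; consequently the suprema of
achievable throughputs coincide. -/
theorem statement0 {V : Type*} [Fintype V] [DecidableEq V] (G : PEG V)
    (m : V → V → ℝ≥0) :
    (∀ (F : TPath V → ℝ≥0) (θ : ℝ≥0∞), IsLegalTemporalFlow G F →
      AchievesThroughputT G F m θ →
      ∃ F' : ExtPath V → ℝ≥0, IsLegalStaticFlow G (PStarStatic G) F' ∧
        AchievesThroughputS (PStarStatic G) F' m θ) ∧
    (∀ (F' : ExtPath V → ℝ≥0) (θ : ℝ≥0∞), IsLegalStaticFlow G (PStarStatic G) F' →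
      AchievesThroughputS (PStarStatic G) F' m θ →
      ∃ F : TPath V → ℝ≥0, IsLegalTemporalFlow G F ∧ AchievesThroughputT G F m θ) ∧
    sSup {θ : ℝ≥0∞ | ∃ F : TPath V → ℝ≥0,
        IsLegalTemporalFlow G F ∧ AchievesThroughputT G F m θ} =
      sSup {θ : ℝ≥0∞ | ∃ F' : ExtPath V → ℝ≥0,
        IsLegalStaticFlow G (PStarStatic G) F' ∧
          AchievesThroughputS (PStarStatic G) F' m θ} :=
  statement0_general G m

end RDCN
end

section
/- Let 𝒢 be a periodic evolving graph with period Γ, emulated graph G(𝒢), and extended path set P* = static(𝒫⁰), and let M be a demand matrix. Let P be the set of all simple directed paths in G(𝒢) (sequences of labelled edges forming a path visiting pairwise distinct vertices). If F : P → ℝ≥0 is a legal flow in G(𝒢) achieving throughput θ for M, then the flow F′ : P* → ℝ≥0 defined by F′(p′) = F(p)/|I(p)| for every p ∈ P and every p′ ∈ I(p), where I(p) ⊆ P* is the (nonempty, finite) set of extended paths whose labelled-edge sequence is identical to that of p, is a legal flow on P* achieving throughput θ for M. -/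
open scoped ENNReal NNReal BigOperators

namespace RDCN

variable {V : Type*}

/-- The set `P` of all simple directed paths in the emulated graph `G(𝒢)`:
sequences of labelled edges (each a labelled edge of the emulated graph) forming a
directed path visiting pairwise distinct vertices. -/
def EmulatedPaths (G : PEG V) : Set (TPath V) :=
  {q | (∀ x ∈ q, x.2 < G.Γ ∧ x.1 ∈ G.E x.2) ∧ IsSimpleEdgePath (q.map Prod.fst)}

/-- A legal flow on a set `P` of (plain) labelled-edge paths of the emulated graph. -/
def IsLegalPlainFlow (G : PEG V) (P : Set (TPath V)) (F : TPath V → ℝ≥0) : Prop :=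
  ∀ (e : Edge V) (ℓ : ℕ), ℓ < G.Γ →
    ∑' p : {p : TPath V // p ∈ P ∧ (e, ℓ) ∈ p}, ((F (p : TPath V) : ℝ≥0) : ℝ≥0∞)
      ≤ chat G e ℓ

/-- The plain flow `F` on `P` achieves throughput `θ` for `m`. -/
def AchievesThroughputPlain (P : Set (TPath V)) (F : TPath V → ℝ≥0)
    (m : V → V → ℝ≥0) (θ : ℝ≥0∞) : Prop :=
  ∀ s d : V, θ * (m s d : ℝ≥0∞) ≤
    ∑' p : {p : TPath V // p ∈ P ∧ EndpointsOf (p.map Prod.fst) s d},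
      ((F (p : TPath V) : ℝ≥0) : ℝ≥0∞)

/-- `I(p)`: the set of extended paths in `P*` whose labelled-edge sequence is
identical to that of `p`. -/
def IdentSet (G : PEG V) (p : TPath V) : Set (ExtPath V) :=
  {q | q ∈ PStarStatic G ∧ q.1 = p}

end RDCN

/-!
Every extended path `q ∈ P*` has a labelled-edge sequence `q.1 ∈ P`, and the extended paths
over a given `p ∈ P` form exactly `I(p)`; so every sum over (a part of) `P*` splits into sums
over the fibres `I(p)`. Since `F'` spreads `F p` evenly over `I(p)`, each fibre contributes
`F p`, and the capacity and throughput sums of `F'` equal those of `F`. This needs `I(p)` to be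
finite and nonempty: nonempty because `p` can be scheduled greedily in time, each labelled edge
at the first later time carrying its label modulo `Γ`; finite because consecutive times of a
temporal path differ by at most `Γ`, so all times of a foundation path over `p` are bounded.
-/

theorem List.IsChain.le_head_add_mul_length {c : ℕ} :
    ∀ {l : List ℕ}, l.IsChain (fun a b => b ≤ a + c) →
      ∀ a ∈ l.head?, ∀ x ∈ l, x ≤ a + c * l.length
  | [], _, _, ha, _, _ => by simp at ha
  | [y], _, a, ha, x, hx => by
    obtain rfl : y = a := by simpa using ha
    obtain rfl : x = y := by simpa using hx
    omega
  | y :: z :: l, hl, a, ha, x, hx => by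
    obtain rfl : y = a := by simpa using ha
    rw [List.isChain_cons_cons] at hl
    rcases List.mem_cons.mp hx with rfl | hx
    · omega
    · have := hl.2.le_head_add_mul_length z (by simp) x hx
      simp only [List.length_cons] at this ⊢
      nlinarith [hl.1]

theorem List.finite_setOf_length_le_forall_mem {α : Type*} {s : Set α} (hs : s.Finite)
    (n : ℕ) : {l : List α | l.length ≤ n ∧ ∀ x ∈ l, x ∈ s}.Finite := by
  have : Finite s := hs
  refine ((List.finite_length_le s n).image (List.map Subtype.val)).subset ?_
  rintro l ⟨hn, hl⟩
  exact ⟨l.attachWith (· ∈ s) hl, by simpa using hn, List.attachWith_map_subtype_val hl⟩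

theorem ENNReal.tsum_coe_div_ncard {α : Type*} {s : Set α} (hs : s.Finite) (hne : s.Nonempty)
    (x : ℝ≥0) : ∑' _ : s, ((x / s.ncard : ℝ≥0) : ℝ≥0∞) = x := by
  have hcard : (s.ncard : ℝ≥0) ≠ 0 := Nat.cast_ne_zero.mpr ((Set.ncard_pos hs).mpr hne).ne'
  rw [ENNReal.tsum_set_const, ← hs.cast_ncard_eq, ENat.toENNReal_coe, ← ENNReal.coe_natCast,
    ← ENNReal.coe_mul, mul_div_cancel₀ x hcard]

/-- The first time `t ≥ b` with `t ≡ ℓ [MOD Γ]`. -/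
def nextTimeMod (Γ b ℓ : ℕ) : ℕ := b + (ℓ + Γ - b % Γ) % Γ

theorem le_nextTimeMod (Γ b ℓ : ℕ) : b ≤ nextTimeMod Γ b ℓ := Nat.le_add_right _ _

theorem nextTimeMod_lt {Γ : ℕ} (hΓ : 0 < Γ) (b ℓ : ℕ) : nextTimeMod Γ b ℓ < b + Γ :=
  Nat.add_lt_add_left (Nat.mod_lt _ hΓ) b

theorem nextTimeMod_mod {Γ ℓ : ℕ} (hℓ : ℓ < Γ) (b : ℕ) : nextTimeMod Γ b ℓ % Γ = ℓ := by
  have hb : b % Γ ≤ ℓ + Γ := (Nat.mod_lt b (by omega)).le.trans (by omega)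
  rw [nextTimeMod, Nat.add_mod_mod, ← Nat.mod_add_mod, Nat.add_sub_cancel' hb,
    Nat.add_mod_right, Nat.mod_eq_of_lt hℓ]

namespace RDCN

variable {V : Type*}

theorem PEG.E_mod (G : PEG V) (t : ℕ) : G.E (t % G.Γ) = G.E t :=
  Function.Periodic.map_mod_nat G.E_periodic t

theorem map_fst_staticOf (Γ : ℕ) (δ : TPath V) :
    (staticOf Γ δ).1.map Prod.fst = δ.map Prod.fst := by
  simp [staticOf, Function.comp_def]

theorem fst_mem_emulatedPaths {G : PEG V} {q : ExtPath V} (hq : q ∈ PStarStatic G) :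
    q.1 ∈ EmulatedPaths G := by
  obtain ⟨δ, ⟨⟨-, hE, -, hsimple⟩, -⟩, rfl⟩ := hq
  refine ⟨?_, by rwa [map_fst_staticOf]⟩
  simp only [staticOf, List.mem_map]
  rintro _ ⟨x, hx, rfl⟩
  exact ⟨Nat.mod_lt _ G.Γ_pos, by rw [G.E_mod]; exact hE x hx⟩

def liftPath (Γ : ℕ) : ℕ → TPath V → TPath V
  | _, [] => []
  | b, x :: p => (x.1, nextTimeMod Γ b x.2) :: liftPath Γ (nextTimeMod Γ b x.2 + 1) p

theorem liftPath_map_mod {Γ : ℕ} :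
    ∀ (b : ℕ) (p : TPath V), (∀ x ∈ p, x.2 < Γ) →
      (liftPath Γ b p).map (fun x => (x.1, x.2 % Γ)) = p
  | _, [], _ => rfl
  | b, x :: p, h => by
    simp only [liftPath, List.map_cons, nextTimeMod_mod (h x List.mem_cons_self),
      liftPath_map_mod _ p fun y hy => h y (List.mem_cons_of_mem _ hy)]

theorem liftPath_head {Γ : ℕ} (hΓ : 0 < Γ) (b : ℕ) (p : TPath V) :
    ∀ y ∈ (liftPath Γ b p).head?, b ≤ y.2 ∧ y.2 < b + Γ := by
  cases p with
  | nil => simp [liftPath]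
  | cons x p =>
    simp only [liftPath, List.head?_cons, Option.mem_def, Option.some.injEq]
    rintro _ rfl
    exact ⟨le_nextTimeMod _ _ _, nextTimeMod_lt hΓ _ _⟩

theorem liftPath_isChain {Γ : ℕ} (hΓ : 0 < Γ) :
    ∀ (b : ℕ) (p : TPath V),
      (liftPath Γ b p).IsChain (fun x y => x.2 < y.2 ∧ y.2 ≤ x.2 + Γ)
  | _, [] => List.isChain_nil
  | b, x :: p => by
    refine List.isChain_cons.mpr ⟨fun y hy => ?_, liftPath_isChain hΓ _ p⟩
    have := liftPath_head hΓ _ p y hy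
    omega

theorem liftPath_mem_foundation {G : PEG V} {p : TPath V} (hp : p ∈ EmulatedPaths G) :
    liftPath G.Γ 0 p ∈ Foundation G := by
  obtain ⟨hlabel, hsimple⟩ := hp
  have hmod := liftPath_map_mod 0 p fun x hx => (hlabel x hx).1
  have hfst : (liftPath G.Γ 0 p).map Prod.fst = p.map Prod.fst := by
    rw [← map_fst_staticOf G.Γ, staticOf, hmod]
  refine ⟨⟨?_, ?_, liftPath_isChain G.Γ_pos 0 p, hfst ▸ hsimple⟩, ?_⟩
  · intro h
    exact hsimple.1 (by rw [← hmod, h]; rfl)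
  · intro x hx
    rw [← G.E_mod]
    exact (hlabel _ (hmod ▸ List.mem_map_of_mem hx)).2
  · intro t₀ ht₀
    obtain ⟨y, hy, rfl⟩ := Option.map_eq_some_iff.mp ht₀
    simpa using (liftPath_head G.Γ_pos 0 p y hy).2

theorem identSet_nonempty {G : PEG V} {p : TPath V} (hp : p ∈ EmulatedPaths G) :
    (IdentSet G p).Nonempty :=
  ⟨_, ⟨_, liftPath_mem_foundation hp, rfl⟩,
    liftPath_map_mod 0 p fun x hx => (hp.1 x hx).1⟩

theorem identSet_finite (G : PEG V) (p : TPath V) : (IdentSet G p).Finite := by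
  set B := G.Γ * (p.length + 1)
  have hS : ({e | e ∈ p.map Prod.fst} ×ˢ Set.Iio B).Finite :=
    (List.finite_toSet _).prod (Set.finite_Iio B)
  refine ((List.finite_setOf_length_le_forall_mem hS p.length).image (staticOf G.Γ)).subset ?_
  rintro _ ⟨⟨δ, ⟨⟨hne, -, hchain, -⟩, hstart⟩, rfl⟩, rfl⟩
  obtain ⟨a, l, rfl⟩ := List.exists_cons_of_ne_nil hne
  have ha : a.2 < G.Γ := hstart a.2 rfl
  refine ⟨a :: l, ⟨by simp [staticOf], fun x hx => ⟨?_, ?_⟩⟩, rfl⟩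
  · exact List.mem_map.mpr ⟨(x.1, x.2 % G.Γ), List.mem_map_of_mem hx, rfl⟩
  · have hsteps : ((a :: l).map Prod.snd).IsChain (fun s t => t ≤ s + G.Γ) :=
      (List.isChain_map Prod.snd).mpr (hchain.imp fun _ _ h => h.2)
    have hbound := hsteps.le_head_add_mul_length a.2 rfl x.2 (List.mem_map_of_mem hx)
    simp only [B, Set.mem_Iio, staticOf, List.length_map, List.length_cons] at hbound ⊢
    nlinarith

def pStarStaticEquivSigmaIdentSet (G : PEG V) (C : TPath V → Prop) :
    {q : ExtPath V // q ∈ PStarStatic G ∧ C q.1} ≃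
      Σ p : {p : TPath V // p ∈ EmulatedPaths G ∧ C p}, IdentSet G p where
  toFun q := ⟨⟨q.1.1, fst_mem_emulatedPaths q.2.1, q.2.2⟩, ⟨q, q.2.1, rfl⟩⟩
  invFun x := ⟨x.2, x.2.2.1, by rw [x.2.2.2]; exact x.1.2.2⟩
  left_inv _ := rfl
  right_inv := by
    rintro ⟨⟨p, hp⟩, q, hq⟩
    obtain rfl : q.1 = p := hq.2
    rfl

theorem tsum_pStarStatic_eq_tsum_emulatedPaths {G : PEG V} {F : TPath V → ℝ≥0}
    {F' : ExtPath V → ℝ≥0}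
    (hF' : ∀ p ∈ EmulatedPaths G, ∀ p' ∈ IdentSet G p,
      F' p' = F p / ((IdentSet G p).ncard : ℝ≥0))
    (C : TPath V → Prop) :
    ∑' q : {q : ExtPath V // q ∈ PStarStatic G ∧ C q.1}, (F' q : ℝ≥0∞) =
      ∑' p : {p : TPath V // p ∈ EmulatedPaths G ∧ C p}, (F p : ℝ≥0∞) := by
  rw [← (pStarStaticEquivSigmaIdentSet G C).symm.tsum_eq, ENNReal.tsum_sigma']
  refine tsum_congr fun p => ?_
  calc ∑' q : IdentSet G p, (F' q : ℝ≥0∞)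
      = ∑' _ : IdentSet G p, ((F p / (IdentSet G p).ncard : ℝ≥0) : ℝ≥0∞) :=
        tsum_congr fun q => by rw [hF' p p.2.1 q q.2]
    _ = F p := ENNReal.tsum_coe_div_ncard (identSet_finite G p) (identSet_nonempty p.2.1) _

theorem statement3_general {V : Type*} (G : PEG V)
    (m : V → V → ℝ≥0) (θ : ℝ≥0∞) (F : TPath V → ℝ≥0)
    (hleg : IsLegalPlainFlow G (EmulatedPaths G) F)
    (hth : AchievesThroughputPlain (EmulatedPaths G) F m θ)
    (F' : ExtPath V → ℝ≥0)
    (hF' : ∀ p ∈ EmulatedPaths G, ∀ p' ∈ IdentSet G p,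
      F' p' = F p / ((IdentSet G p).ncard : ℝ≥0)) :
    (∀ p ∈ EmulatedPaths G, (IdentSet G p).Finite ∧ (IdentSet G p).Nonempty) ∧
      IsLegalStaticFlow G (PStarStatic G) F' ∧
      AchievesThroughputS (PStarStatic G) F' m θ := by
  refine ⟨fun p hp => ⟨identSet_finite G p, identSet_nonempty hp⟩, ⟨?_, ?_⟩, ?_⟩
  · intro p hp q hq hpq
    rw [hF' _ (fst_mem_emulatedPaths hp) p ⟨hp, rfl⟩,
      hF' _ (fst_mem_emulatedPaths hq) q ⟨hq, rfl⟩, hpq]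
  · intro e ℓ hℓ
    rw [tsum_pStarStatic_eq_tsum_emulatedPaths hF' fun p => (e, ℓ) ∈ p]
    exact hleg e ℓ hℓ
  · intro s d
    exact (hth s d).trans_eq
      (tsum_pStarStatic_eq_tsum_emulatedPaths hF' fun p => EndpointsOf (p.map Prod.fst) s d).symm

/-- Lemma: from all simple paths to extended paths.
If `F` is a legal flow on the set `P` of all simple directed paths of the emulated
graph achieving throughput `θ` for `m`, then `I(p)` is nonempty and finite for every
`p ∈ P`, and the flow `F'` defined by `F'(p') = F(p)/|I(p)|` for every `p ∈ P` and
`p' ∈ I(p)` is a legal flow on `P* = static(𝒫⁰)` achieving throughput `θ` for `m`. -/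
theorem statement3 {V : Type*} [Fintype V] [DecidableEq V] (G : PEG V)
    (m : V → V → ℝ≥0) (θ : ℝ≥0∞) (F : TPath V → ℝ≥0)
    (hleg : IsLegalPlainFlow G (EmulatedPaths G) F)
    (hth : AchievesThroughputPlain (EmulatedPaths G) F m θ)
    (F' : ExtPath V → ℝ≥0)
    (hF' : ∀ p ∈ EmulatedPaths G, ∀ p' ∈ IdentSet G p,
      F' p' = F p / ((IdentSet G p).ncard : ℝ≥0)) :
    (∀ p ∈ EmulatedPaths G, (IdentSet G p).Finite ∧ (IdentSet G p).Nonempty) ∧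
      IsLegalStaticFlow G (PStarStatic G) F' ∧
      AchievesThroughputS (PStarStatic G) F' m θ :=
  statement3_general G m θ F hleg hth F' hF'

end RDCN
end

section
/- Let G = (V,E) be a static directed multigraph with labelled edges and nonnegative capacities ĉ(e,ℓ), let M = (m_{s,d}) be a demand matrix with total demand M_tot = Σ_{s,d} m_{s,d} > 0, and let F be a legal flow on a finite set P of simple directed paths of G achieving throughput θ(M,F) > 0 for M. Then θ(M,F) ≤ Ĉ / (M_tot · ARL(M,F)), where Ĉ = Σ_{(e,ℓ) ∈ E} ĉ(e,ℓ) is the total capacity and ARL(M,F) is the average route length of F with respect to M. -/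
open scoped BigOperators

namespace StaticMG

attribute [local instance] Classical.propDecidable

/-- A directed edge. -/
abbrev Edge (V : Type*) := V × V
/-- A labelled edge `(e,ℓ)` of a directed multigraph. -/
abbrev LEdge (V : Type*) := Edge V × ℕ
/-- A path: a list of labelled edges. -/
abbrev Path (V : Type*) := List (LEdge V)

variable {V : Type*}

/-- The vertex sequence of a list of directed edges. -/
def pathVerts (es : List (Edge V)) : List V :=
  match es with
  | [] => []
  | e :: _ => e.1 :: es.map Prod.snd

/-- A nonempty list of directed edges forming a directed path visiting pairwise
distinct vertices. -/
def IsSimpleEdgePath (es : List (Edge V)) : Prop :=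
  es ≠ [] ∧ es.Chain' (fun e e' => e.2 = e'.1) ∧ (pathVerts es).Nodup

/-- `es` is a path from `s` to `d`. -/
def EndpointsOf (es : List (Edge V)) (s d : V) : Prop :=
  es.head?.map Prod.fst = some s ∧ es.getLast?.map Prod.snd = some d

/-- The `s`–`d` paths `P_{s,d}` of a finite path set `P`. -/
noncomputable def PathsSD (P : Finset (Path V)) (s d : V) : Finset (Path V) :=
  P.filter fun q => EndpointsOf (q.map Prod.fst) s d

/-- `r_p = F(p)/Σ_{p' ∈ P_{s,d}} F(p')` (equal to `0` when the denominator is `0`,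
which is automatic here since then `F p = 0` for any `p ∈ P_{s,d}` with `F` nonnegative). -/
noncomputable def rP (P : Finset (Path V)) (F : Path V → ℝ) (s d : V) (p : Path V) : ℝ :=
  F p / ∑ q ∈ PathsSD P s d, F q

/-- Total demand `M_tot = Σ_{s,d} m_{s,d}`. -/
noncomputable def Mtot [Fintype V] (m : V → V → ℝ) : ℝ :=
  ∑ s : V, ∑ d : V, m s d

/-- Average route length
`ARL(M,F) = Σ_{s,d} Σ_{p ∈ P_{s,d}} (m_{s,d}/M_tot)·r_p·len(p)`. -/
noncomputable def ARL [Fintype V] (P : Finset (Path V)) (F : Path V → ℝ)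
    (m : V → V → ℝ) : ℝ :=
  ∑ s : V, ∑ d : V, ∑ p ∈ PathsSD P s d,
    (m s d / Mtot m) * rP P F s d p * (p.length : ℝ)

lemma nodup_of_simple (es : List (Edge V)) (h : IsSimpleEdgePath es) : es.Nodup := by
  obtain ⟨hne, -, hnd⟩ := h
  cases es with
  | nil => simp
  | cons e t =>
    have hpv : pathVerts (e :: t) = e.1 :: (e :: t).map Prod.snd := rfl
    rw [hpv] at hnd
    exact (List.nodup_cons.mp hnd).2.of_map

/-- Theorem: throughput upper bound.
For a static directed multigraph `(V,E)` with labelled edges and nonnegative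
capacities `ĉ`, a demand matrix `m` with positive total demand, and a legal flow `F`
on a finite set `P` of simple directed paths achieving throughput `θ > 0`:
`θ ≤ Ĉ / (M_tot · ARL(M,F))`. -/
theorem statement5 {V : Type*} [Fintype V] [DecidableEq V]
    (E : Finset (LEdge V)) (chat : LEdge V → ℝ) (hchat : ∀ le ∈ E, 0 ≤ chat le)
    (P : Finset (Path V))
    (hP : ∀ p ∈ P, (∀ x ∈ p, x ∈ E) ∧ IsSimpleEdgePath (p.map Prod.fst))
    (m : V → V → ℝ) (hm : ∀ s d, 0 ≤ m s d) (hM : 0 < Mtot m)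
    (F : Path V → ℝ) (hF : ∀ p ∈ P, 0 ≤ F p)
    (hleg : ∀ le ∈ E, ∑ p ∈ P.filter (fun p => le ∈ p), F p ≤ chat le)
    (θ : ℝ) (hθ : 0 < θ)
    (hth : ∀ s d : V, θ * m s d ≤ ∑ p ∈ PathsSD P s d, F p) :
    θ ≤ (∑ le ∈ E, chat le) / (Mtot m * ARL P F m) := by
  classical
  have hMne : Mtot m ≠ 0 := ne_of_gt hM
  have hPsub : ∀ s d : V, PathsSD P s d ⊆ P := fun s d => Finset.filter_subset _ _
  have hDnn : ∀ s d : V, (0:ℝ) ≤ ∑ q ∈ PathsSD P s d, F q := fun s d =>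
    Finset.sum_nonneg fun q hq => hF q (hPsub s d hq)
  have hrnn : ∀ s d : V, ∀ p ∈ PathsSD P s d, 0 ≤ rP P F s d p := fun s d p hp =>
    div_nonneg (hF p (hPsub s d hp)) (hDnn s d)
  -- every path in P is nonempty
  have hlen : ∀ p ∈ P, 1 ≤ p.length := by
    intro p hp
    have h := (hP p hp).2.1
    have : p ≠ [] := by
      intro h0; rw [h0] at h; exact h rfl
    exact List.length_pos_iff.mpr this
  -- pointwise key bound
  have key : ∀ s d : V, ∀ p ∈ PathsSD P s d, θ * m s d * rP P F s d p ≤ F p := by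
    intro s d p hp
    rcases eq_or_lt_of_le (hDnn s d) with h0 | hpos
    · have hFp0 : F p = 0 :=
        (Finset.sum_eq_zero_iff_of_nonneg
          (fun q hq => hF q (hPsub s d hq))).mp h0.symm p hp
      simp [rP, hFp0]
    · have h1 : θ * m s d / (∑ q ∈ PathsSD P s d, F q) ≤ 1 :=
        (div_le_one hpos).mpr (hth s d)
      have heq : θ * m s d * rP P F s d p
          = (θ * m s d / (∑ q ∈ PathsSD P s d, F q)) * F p := by
        unfold rP; ring
      rw [heq]
      calc (θ * m s d / (∑ q ∈ PathsSD P s d, F q)) * F p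
          ≤ 1 * F p := mul_le_mul_of_nonneg_right h1 (hF p (hPsub s d hp))
        _ = F p := one_mul _
  -- nonnegativity of each ARL term
  have htermnn : ∀ s' d' : V, ∀ q ∈ PathsSD P s' d',
      0 ≤ (m s' d' / Mtot m) * rP P F s' d' q * (q.length : ℝ) := fun s' d' q hq =>
    mul_nonneg (mul_nonneg (div_nonneg (hm s' d') hM.le) (hrnn s' d' q hq))
      (Nat.cast_nonneg _)
  -- ARL is positive
  have hARLpos : 0 < ARL P F m := by
    -- find s d with m s d > 0
    obtain ⟨s, d, hmsd⟩ : ∃ s d : V, 0 < m s d := by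
      by_contra hcon
      push_neg at hcon
      have : Mtot m ≤ 0 := by
        unfold Mtot
        apply Finset.sum_nonpos
        intro s _
        exact Finset.sum_nonpos fun d _ => hcon s d
      linarith
    have hDpos : 0 < ∑ q ∈ PathsSD P s d, F q :=
      lt_of_lt_of_le (mul_pos hθ hmsd) (hth s d)
    obtain ⟨p, hp, hFp⟩ : ∃ p ∈ PathsSD P s d, 0 < F p := by
      by_contra hcon
      push_neg at hcon
      have : (∑ q ∈ PathsSD P s d, F q) ≤ 0 := Finset.sum_nonpos hcon
      linarith
    have hterm : 0 < (m s d / Mtot m) * rP P F s d p * (p.length : ℝ) := by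
      apply mul_pos
      · exact mul_pos (div_pos hmsd hM) (div_pos hFp hDpos)
      · exact_mod_cast lt_of_lt_of_le one_pos (hlen p (hPsub s d hp))
    unfold ARL
    refine Finset.sum_pos' (fun s' _ => Finset.sum_nonneg fun d' _ =>
        Finset.sum_nonneg fun q hq => htermnn s' d' q hq)
      ⟨s, Finset.mem_univ s, ?_⟩
    refine Finset.sum_pos' (fun d' _ =>
        Finset.sum_nonneg fun q hq => htermnn s d' q hq)
      ⟨d, Finset.mem_univ d, ?_⟩
    exact Finset.sum_pos' (htermnn s d) ⟨p, hp, hterm⟩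
  have hden : 0 < Mtot m * ARL P F m := mul_pos hM hARLpos
  rw [le_div_iff₀ hden]
  -- expand θ * (Mtot * ARL)
  have expand : θ * (Mtot m * ARL P F m)
      = ∑ s : V, ∑ d : V, ∑ p ∈ PathsSD P s d,
          θ * m s d * rP P F s d p * (p.length : ℝ) := by
    unfold ARL
    rw [Finset.mul_sum, Finset.mul_sum]
    refine Finset.sum_congr rfl fun s _ => ?_
    rw [Finset.mul_sum, Finset.mul_sum]
    refine Finset.sum_congr rfl fun d _ => ?_
    rw [Finset.mul_sum, Finset.mul_sum]
    refine Finset.sum_congr rfl fun p _ => ?_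
    field_simp
  rw [expand]
  -- Step 1: bound each term by F p * len p
  have step1 : (∑ s : V, ∑ d : V, ∑ p ∈ PathsSD P s d,
        θ * m s d * rP P F s d p * (p.length : ℝ))
      ≤ ∑ s : V, ∑ d : V, ∑ p ∈ PathsSD P s d, F p * (p.length : ℝ) := by
    refine Finset.sum_le_sum fun s _ => Finset.sum_le_sum fun d _ =>
      Finset.sum_le_sum fun p hp => ?_
    exact mul_le_mul_of_nonneg_right (key s d p hp) (Nat.cast_nonneg _)
  -- Step 2: the double sum over (s,d) covers each path at most once
  have step2 : (∑ s : V, ∑ d : V, ∑ p ∈ PathsSD P s d, F p * (p.length : ℝ))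
      ≤ ∑ p ∈ P, F p * (p.length : ℝ) := by
    have hrw : ∀ s d : V, (∑ p ∈ PathsSD P s d, F p * (p.length : ℝ))
        = ∑ p ∈ P, if EndpointsOf (p.map Prod.fst) s d
            then F p * (p.length : ℝ) else 0 := by
      intro s d
      rw [PathsSD, Finset.sum_filter]
    simp only [hrw]
    have hswap : (∑ s : V, ∑ d : V, ∑ p ∈ P,
          if EndpointsOf (p.map Prod.fst) s d then F p * (p.length : ℝ) else 0)
        = ∑ p ∈ P, ∑ s : V, ∑ d : V,
          if EndpointsOf (p.map Prod.fst) s d then F p * (p.length : ℝ) else 0 :=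
      calc (∑ s : V, ∑ d : V, ∑ p ∈ P,
            if EndpointsOf (p.map Prod.fst) s d then F p * (p.length : ℝ) else 0)
          = ∑ s : V, ∑ p ∈ P, ∑ d : V,
            if EndpointsOf (p.map Prod.fst) s d then F p * (p.length : ℝ) else 0 :=
          Finset.sum_congr rfl fun s _ => Finset.sum_comm
        _ = _ := Finset.sum_comm
    rw [hswap]
    refine Finset.sum_le_sum fun p hp => ?_
    -- p is nonempty, so it has unique endpoints
    have hne : p.map Prod.fst ≠ [] := (hP p hp).2.1
    obtain ⟨a, es, hes⟩ : ∃ a es, p.map Prod.fst = a :: es :=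
      List.exists_cons_of_ne_nil hne
    have hhead : (p.map Prod.fst).head? = some a := by rw [hes]; rfl
    obtain ⟨b, hb⟩ : ∃ b, (p.map Prod.fst).getLast? = some b :=
      Option.isSome_iff_exists.mp (List.getLast?_isSome.mpr hne)
    have hiff : ∀ s d : V, EndpointsOf (p.map Prod.fst) s d ↔ (a.1 = s ∧ b.2 = d) := by
      intro s d
      unfold EndpointsOf
      rw [hhead, hb]
      simp
    have h1 : (∑ s : V, ∑ d : V, if EndpointsOf (p.map Prod.fst) s d
        then F p * (p.length : ℝ) else 0)
        = ∑ s : V, ∑ d : V, if a.1 = s ∧ b.2 = d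
            then F p * (p.length : ℝ) else 0 := by
      refine Finset.sum_congr rfl fun s _ => Finset.sum_congr rfl fun d _ => ?_
      rw [if_congr (hiff s d) rfl rfl]
    rw [h1]
    have h2 : ∀ s : V, (∑ d : V, if a.1 = s ∧ b.2 = d
        then F p * (p.length : ℝ) else 0)
        = if a.1 = s then F p * (p.length : ℝ) else 0 := by
      intro s
      by_cases h : a.1 = s <;> simp [h]
    simp [h2]
  -- Step 3: rewrite via capacities
  have step3 : (∑ p ∈ P, F p * (p.length : ℝ))
      = ∑ le ∈ E, ∑ p ∈ P.filter (fun p => le ∈ p), F p := by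
    have hrw : ∀ p ∈ P, F p * (p.length : ℝ)
        = ∑ le ∈ E, if le ∈ p then F p else 0 := by
      intro p hp
      have hnd : p.Nodup := (nodup_of_simple _ (hP p hp).2).of_map
      have hfe : E.filter (fun le => le ∈ p) = p.toFinset := by
        ext le
        simp only [Finset.mem_filter, List.mem_toFinset]
        exact ⟨And.right, fun h => ⟨(hP p hp).1 le h, h⟩⟩
      rw [← Finset.sum_filter, hfe, Finset.sum_const,
        List.toFinset_card_of_nodup hnd, nsmul_eq_mul, mul_comm]
    rw [Finset.sum_congr rfl hrw, Finset.sum_comm]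
    exact Finset.sum_congr rfl fun le _ => (Finset.sum_filter _ _).symm
  calc (∑ s : V, ∑ d : V, ∑ p ∈ PathsSD P s d,
        θ * m s d * rP P F s d p * (p.length : ℝ))
      ≤ ∑ p ∈ P, F p * (p.length : ℝ) := le_trans step1 step2
    _ = ∑ le ∈ E, ∑ p ∈ P.filter (fun p => le ∈ p), F p := step3
    _ ≤ ∑ le ∈ E, chat le := Finset.sum_le_sum fun le hle => hleg le hle

end StaticMG
end

section
/- Let G = (V,E) be a static directed multigraph with labelled edges and nonnegative capacities ĉ(e,ℓ), let M = (m_{s,d}) be a demand matrix whose total demand M_tot = Σ_{s,d} m_{s,d} equals the total capacity Ĉ = Σ_{(e,ℓ) ∈ E} ĉ(e,ℓ) > 0, and let F be a legal flow on a finite set P of simple directed paths of G achieving throughput θ > 0 for M. Then θ · ARL(M,F) ≤ 1; in particular, if every path in P with positive flow between a pair with positive demand has length at least k, then θ ≤ 1/k. -/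
open scoped BigOperators

namespace StaticMG

attribute [local instance] Classical.propDecidable

variable {V : Type*}

/-! Each unit of flow routed along a path `p` uses up `len p` units of capacity, one on each
of its (pairwise distinct) edges, so `Σ_p F(p) len(p) ≤ Ĉ = M_tot`. On the other hand, since
every pair `(s,d)` receives at least `θ m_{s,d}` units of flow, `θ m_{s,d} r_p ≤ F(p)`, and
summing gives `θ · ARL · M_tot ≤ Σ_p F(p) len(p)`. The bound `θ ≤ 1/k` follows because the
`r_p` of a pair with positive demand form a probability distribution supported on paths of
length at least `k`, so that `ARL ≥ k`. -/

lemma map_fst_prefix_pathVerts {es : List (Edge V)} (h : es.IsChain (fun e e' => e.2 = e'.1)) :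
    es.map Prod.fst <+: pathVerts es := by
  induction es with
  | nil => simp [pathVerts]
  | cons e rest ih =>
    match rest, h with
    | [], _ => simp [pathVerts]
    | e' :: rest', h =>
      rw [List.isChain_cons_cons] at h
      have hrest : pathVerts (e' :: rest') = e.2 :: (e' :: rest').map Prod.snd := by
        simp [pathVerts, h.1]
      have ih' := ih h.2
      rw [hrest] at ih'
      simpa [pathVerts] using ih'

lemma nodup_of_isSimpleEdgePath {p : Path V} (h : IsSimpleEdgePath (p.map Prod.fst)) :
    p.Nodup := by
  obtain ⟨-, hchain, hnodup⟩ := h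
  have : ((p.map Prod.fst).map Prod.fst).Nodup :=
    hnodup.sublist (map_fst_prefix_pathVerts hchain).sublist
  exact (this.of_map _).of_map _

lemma card_filter_mem_eq_length [DecidableEq V] {E : Finset (LEdge V)} {p : Path V}
    (hpE : ∀ x ∈ p, x ∈ E) (hp : p.Nodup) : (E.filter fun le => le ∈ p).card = p.length := by
  rw [← List.toFinset_card_of_nodup hp]
  congr 1
  ext le
  simpa using hpE le

lemma sum_mul_length_le_sum_capacity [DecidableEq V] (E : Finset (LEdge V)) (chat : LEdge V → ℝ)
    (P : Finset (Path V)) (hPE : ∀ p ∈ P, ∀ x ∈ p, x ∈ E) (hnodup : ∀ p ∈ P, p.Nodup)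
    (F : Path V → ℝ) (hleg : ∀ le ∈ E, ∑ p ∈ P.filter (fun p => le ∈ p), F p ≤ chat le) :
    ∑ p ∈ P, F p * p.length ≤ ∑ le ∈ E, chat le :=
  calc ∑ p ∈ P, F p * p.length
      = ∑ p ∈ P, ∑ le ∈ E.filter (fun le => le ∈ p), F p := by
        refine Finset.sum_congr rfl fun p hp => ?_
        rw [Finset.sum_const, card_filter_mem_eq_length (hPE p hp) (hnodup p hp), nsmul_eq_mul,
          mul_comm]
    _ = ∑ le ∈ E, ∑ p ∈ P.filter (fun p => le ∈ p), F p :=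
        Finset.sum_comm' fun p le => by
          simp only [Finset.mem_filter]
          exact ⟨fun h => ⟨⟨h.1, h.2.2⟩, hPE p h.1 le h.2.2⟩, fun h => ⟨h.1.1, h.2, h.1.2⟩⟩
    _ ≤ ∑ le ∈ E, chat le := Finset.sum_le_sum hleg

lemma EndpointsOf.unique {es : List (Edge V)} {s d s' d' : V} (h : EndpointsOf es s d)
    (h' : EndpointsOf es s' d') : s = s' ∧ d = d' :=
  ⟨Option.some.inj (h.1.symm.trans h'.1), Option.some.inj (h.2.symm.trans h'.2)⟩

lemma pathsSD_subset (P : Finset (Path V)) (s d : V) : PathsSD P s d ⊆ P :=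
  Finset.filter_subset _ _

lemma sum_sum_sum_pathsSD_le [Fintype V] (P : Finset (Path V)) (g : Path V → ℝ)
    (hg : ∀ p ∈ P, 0 ≤ g p) :
    ∑ s : V, ∑ d : V, ∑ p ∈ PathsSD P s d, g p ≤ ∑ p ∈ P, g p := by
  have hdisj : (Set.univ : Set (V × V)).PairwiseDisjoint fun x => PathsSD P x.1 x.2 := by
    rintro ⟨s, d⟩ - ⟨s', d'⟩ - hne
    refine Finset.disjoint_left.mpr fun p hp hp' => hne ?_
    obtain ⟨rfl, rfl⟩ := (Finset.mem_filter.mp hp).2.unique (Finset.mem_filter.mp hp').2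
    rfl
  rw [← Finset.sum_product' (f := fun s d => ∑ p ∈ PathsSD P s d, g p), Finset.univ_product_univ,
    ← Finset.sum_biUnion (by simpa using hdisj)]
  exact Finset.sum_le_sum_of_subset_of_nonneg
    (Finset.biUnion_subset.mpr fun x _ => pathsSD_subset P x.1 x.2) fun p hp _ => hg p hp

section RouteLength

variable {P : Finset (Path V)} {F : Path V → ℝ} {s d : V}

lemma mul_rP_le (hF : ∀ p ∈ PathsSD P s d, 0 ≤ F p) {c : ℝ}
    (hc : c ≤ ∑ q ∈ PathsSD P s d, F q) {p : Path V} (hp : p ∈ PathsSD P s d) :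
    c * rP P F s d p ≤ F p := by
  rcases (Finset.sum_nonneg hF).eq_or_lt with hD | hD
  · simpa [rP, ← hD] using hF p hp
  · calc c * rP P F s d p ≤ (∑ q ∈ PathsSD P s d, F q) * rP P F s d p :=
          mul_le_mul_of_nonneg_right hc (div_nonneg (hF p hp) hD.le)
      _ = F p := mul_div_cancel₀ _ hD.ne'

lemma sum_rP_eq_one (hD : ∑ q ∈ PathsSD P s d, F q ≠ 0) :
    ∑ p ∈ PathsSD P s d, rP P F s d p = 1 := by
  simp only [rP]
  rw [← Finset.sum_div, div_self hD]

lemma le_sum_rP_mul_length (hF : ∀ p ∈ PathsSD P s d, 0 ≤ F p)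
    (hD : 0 < ∑ q ∈ PathsSD P s d, F q) {k : ℕ}
    (hk : ∀ p ∈ PathsSD P s d, 0 < F p → k ≤ p.length) :
    (k : ℝ) ≤ ∑ p ∈ PathsSD P s d, rP P F s d p * p.length :=
  calc (k : ℝ) = ∑ p ∈ PathsSD P s d, rP P F s d p * k := by
        rw [← Finset.sum_mul, sum_rP_eq_one hD.ne', one_mul]
    _ ≤ ∑ p ∈ PathsSD P s d, rP P F s d p * p.length := by
        refine Finset.sum_le_sum fun p hp => ?_
        rcases (hF p hp).eq_or_lt with hFp | hFp
        · simp [rP, ← hFp]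
        · exact mul_le_mul_of_nonneg_left (by exact_mod_cast hk p hp hFp)
            (div_nonneg hFp.le hD.le)

variable [Fintype V] {m : V → V → ℝ}

lemma ARL_eq (P : Finset (Path V)) (F : Path V → ℝ) (m : V → V → ℝ) :
    ARL P F m = ∑ s : V, ∑ d : V,
      m s d / Mtot m * ∑ p ∈ PathsSD P s d, rP P F s d p * p.length := by
  simp only [ARL, Finset.mul_sum, mul_assoc]

lemma mul_ARL_le (hM : 0 < Mtot m) (hF : ∀ p ∈ P, 0 ≤ F p) {θ : ℝ}
    (hth : ∀ s d : V, θ * m s d ≤ ∑ p ∈ PathsSD P s d, F p) :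
    θ * ARL P F m ≤ (∑ p ∈ P, F p * p.length) / Mtot m := by
  calc θ * ARL P F m
      = (∑ s : V, ∑ d : V, ∑ p ∈ PathsSD P s d, θ * m s d * rP P F s d p * p.length) / Mtot m := by
        simp only [ARL, Finset.mul_sum, Finset.sum_div]
        exact Fintype.sum_congr _ _ fun s => Fintype.sum_congr _ _ fun d =>
          Finset.sum_congr rfl fun p _ => by ring
    _ ≤ (∑ s : V, ∑ d : V, ∑ p ∈ PathsSD P s d, F p * p.length) / Mtot m := by
        gcongr with s _ d _ p hp
        exact mul_rP_le (fun q hq => hF q (pathsSD_subset P s d hq)) (hth s d) hp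
    _ ≤ (∑ p ∈ P, F p * p.length) / Mtot m := by
        gcongr
        exact sum_sum_sum_pathsSD_le P _ fun p hp => mul_nonneg (hF p hp) p.length.cast_nonneg

lemma le_ARL (hM : 0 < Mtot m) (hm : ∀ s d, 0 ≤ m s d) (hF : ∀ p ∈ P, 0 ≤ F p)
    (hD : ∀ s d : V, 0 < m s d → 0 < ∑ p ∈ PathsSD P s d, F p) {k : ℕ}
    (hk : ∀ s d : V, 0 < m s d → ∀ p ∈ PathsSD P s d, 0 < F p → k ≤ p.length) :
    (k : ℝ) ≤ ARL P F m :=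
  calc (k : ℝ) = ∑ s : V, ∑ d : V, m s d / Mtot m * k := by
        simp only [← Finset.sum_mul, ← Finset.sum_div]
        rw [← Mtot, div_self hM.ne', one_mul]
    _ ≤ ARL P F m := by
        rw [ARL_eq]
        refine Finset.sum_le_sum fun s _ => Finset.sum_le_sum fun d _ => ?_
        rcases (hm s d).eq_or_lt with hmsd | hmsd
        · simp [← hmsd]
        · exact mul_le_mul_of_nonneg_left
            (le_sum_rP_mul_length (fun p hp => hF p (pathsSD_subset P s d hp)) (hD s d hmsd)
              (hk s d hmsd)) (div_nonneg hmsd.le hM.le)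

end RouteLength

theorem statement6_general {V : Type*} [Fintype V] [DecidableEq V]
    (E : Finset (LEdge V)) (chat : LEdge V → ℝ)
    (P : Finset (Path V))
    (hP : ∀ p ∈ P, (∀ x ∈ p, x ∈ E) ∧ IsSimpleEdgePath (p.map Prod.fst))
    (m : V → V → ℝ) (hm : ∀ s d, 0 ≤ m s d)
    (hMC : Mtot m = ∑ le ∈ E, chat le) (hCpos : 0 < ∑ le ∈ E, chat le)
    (F : Path V → ℝ) (hF : ∀ p ∈ P, 0 ≤ F p)
    (hleg : ∀ le ∈ E, ∑ p ∈ P.filter (fun p => le ∈ p), F p ≤ chat le)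
    (θ : ℝ) (hθ : 0 < θ)
    (hth : ∀ s d : V, θ * m s d ≤ ∑ p ∈ PathsSD P s d, F p) :
    θ * ARL P F m ≤ 1 ∧
      ∀ k : ℕ, 0 < k →
        (∀ s d : V, 0 < m s d → ∀ p ∈ PathsSD P s d, 0 < F p → k ≤ p.length) →
        θ ≤ 1 / (k : ℝ) := by
  have hM : 0 < Mtot m := hMC ▸ hCpos
  have hARL : θ * ARL P F m ≤ 1 :=
    calc θ * ARL P F m ≤ (∑ p ∈ P, F p * p.length) / Mtot m := mul_ARL_le hM hF hth
      _ ≤ (∑ le ∈ E, chat le) / Mtot m :=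
          div_le_div_of_nonneg_right (sum_mul_length_le_sum_capacity E chat P
            (fun p hp => (hP p hp).1) (fun p hp => nodup_of_isSimpleEdgePath (hP p hp).2)
            F hleg) hM.le
      _ = 1 := by rw [hMC, div_self hCpos.ne']
  refine ⟨hARL, fun k hk hlen => ?_⟩
  have hkARL : (k : ℝ) ≤ ARL P F m :=
    le_ARL hM hm hF (fun s d hmsd => (mul_pos hθ hmsd).trans_le (hth s d)) hlen
  rw [le_div_iff₀ (by exact_mod_cast hk)]
  exact (mul_le_mul_of_nonneg_left hkARL hθ.le).trans hARL

/-- throughput–average-route-length tradeoff for saturated demand.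
If additionally the total demand equals the total capacity `Ĉ > 0`, then
`θ · ARL(M,F) ≤ 1`; in particular, if every path of `P` carrying positive flow between
a pair with positive demand has length at least `k ≥ 1`, then `θ ≤ 1/k`. -/
theorem statement6 {V : Type*} [Fintype V] [DecidableEq V]
    (E : Finset (LEdge V)) (chat : LEdge V → ℝ) (hchat : ∀ le ∈ E, 0 ≤ chat le)
    (P : Finset (Path V))
    (hP : ∀ p ∈ P, (∀ x ∈ p, x ∈ E) ∧ IsSimpleEdgePath (p.map Prod.fst))
    (m : V → V → ℝ) (hm : ∀ s d, 0 ≤ m s d)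
    (hMC : Mtot m = ∑ le ∈ E, chat le) (hCpos : 0 < ∑ le ∈ E, chat le)
    (F : Path V → ℝ) (hF : ∀ p ∈ P, 0 ≤ F p)
    (hleg : ∀ le ∈ E, ∑ p ∈ P.filter (fun p => le ∈ p), F p ≤ chat le)
    (θ : ℝ) (hθ : 0 < θ)
    (hth : ∀ s d : V, θ * m s d ≤ ∑ p ∈ PathsSD P s d, F p) :
    θ * ARL P F m ≤ 1 ∧
      ∀ k : ℕ, 0 < k →
        (∀ s d : V, 0 < m s d → ∀ p ∈ PathsSD P s d, 0 < F p → k ≤ p.length) →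
        θ ≤ 1 / (k : ℝ) :=
  statement6_general E chat P hP m hm hMC hCpos F hF hleg θ hθ hth

end StaticMG
end

section
/- Let n ≥ 1 and d ≥ 2 be integers, and let k = ⌈log_d(n)⌉ (the least natural number k with d^k ≥ n). Consider the generalized de Bruijn digraph on vertex set ℤ/nℤ with edges u → (d·u + a) mod n for every a ∈ {0,1,…,d−1}. Then for every pair of vertices u, v there exists a directed walk of length exactly k from u to v; equivalently, for all u, v ∈ ℤ/nℤ there exist a₁,…,a_k ∈ {0,…,d−1} with v ≡ d^k·u + Σ_{i=1}^{k} aᵢ·d^{k−i} (mod n). In particular the diameter of this digraph is at most ⌈log_d(n)⌉. -/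
open scoped BigOperators

/-- diameter of the generalized de Bruijn digraph.
Let `n ≥ 1`, `d ≥ 2` and let `k` be the least natural number with `d^k ≥ n`
(`k = ⌈log_d n⌉`). In the generalized de Bruijn digraph on `ℤ/nℤ` with edges
`u → d·u + a (mod n)` for `a ∈ {0,…,d−1}`, between every pair `u, v` there is a
directed walk of length exactly `k`; equivalently there are digits
`a₁,…,a_k ∈ {0,…,d−1}` with `v ≡ d^k·u + Σᵢ aᵢ·d^{k−i} (mod n)`. In particular the
diameter is at most `⌈log_d n⌉`. -/
theorem statement15 (n d : ℕ) (hn : 1 ≤ n) (hd : 2 ≤ d) (k : ℕ)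
    (hk : n ≤ d ^ k) (hkmin : ∀ j : ℕ, n ≤ d ^ j → k ≤ j)
    (u v : ZMod n) :
    (∃ w : Fin (k + 1) → ZMod n, w 0 = u ∧ w (Fin.last k) = v ∧
      ∀ i : Fin k, ∃ a : Fin d,
        w i.succ = (d : ZMod n) * w i.castSucc + ((a : ℕ) : ZMod n)) ∧
    (∃ a : Fin k → Fin d,
      v = (d : ZMod n) ^ k * u +
        ∑ i : Fin k, ((a i : ℕ) : ZMod n) * (d : ZMod n) ^ (k - 1 - (i : ℕ))) := by
  have : NeZero n := ⟨by omega⟩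
  have hd0 : 0 < d := by omega
  set t := (v - (d : ZMod n) ^ k * u).val with ht
  have htlt : t < d ^ k := lt_of_lt_of_le (ZMod.val_lt _) hk
  have hcast : ((t : ℕ) : ZMod n) = v - (d : ZMod n) ^ k * u := by
    simp [ht, ZMod.natCast_val, ZMod.cast_id]
  have key : ∀ j, t / d ^ j = d * (t / d ^ (j + 1)) + t / d ^ j % d := by
    intro j
    conv_lhs => rw [← Nat.div_add_mod (t / d ^ j) d]
    rw [Nat.div_div_eq_div_mul, ← pow_succ]
  have hsum : ∑ j ∈ Finset.range k, (t / d ^ j % d) * d ^ j = t := by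
    have H : ∀ m, ∑ j ∈ Finset.range m, (t / d ^ j % d) * d ^ j = t % d ^ m := by
      intro m
      induction m with
      | zero => simp [Nat.mod_one]
      | succ m ih => rw [Finset.sum_range_succ, ih, Nat.mod_pow_succ]; ring
    rw [H k, Nat.mod_eq_of_lt htlt]
  set a : Fin k → Fin d := fun i => ⟨t / d ^ (k - 1 - (i : ℕ)) % d, Nat.mod_lt _ hd0⟩
    with ha
  constructor
  · refine ⟨fun i => (d : ZMod n) ^ (i : ℕ) * u + ((t / d ^ (k - (i : ℕ)) : ℕ) : ZMod n),
      ?_, ?_, ?_⟩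
    · simp [Nat.div_eq_of_lt htlt]
    · simp only [Fin.val_last]
      rw [Nat.sub_self, pow_zero, Nat.div_one, hcast]
      ring
    · intro i
      refine ⟨a i, ?_⟩
      have hik : (i : ℕ) < k := i.isLt
      have h2 : k - ((i : ℕ) + 1) = k - 1 - (i : ℕ) := by omega
      have h1 : (k - 1 - (i : ℕ)) + 1 = k - (i : ℕ) := by omega
      simp only [Fin.val_succ, Fin.coe_castSucc, ha]
      rw [h2]
      have hkey := key (k - 1 - (i : ℕ))
      rw [h1] at hkey
      have hz : ((t / d ^ (k - 1 - (i : ℕ)) : ℕ) : ZMod n)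
          = (d : ZMod n) * ((t / d ^ (k - (i : ℕ)) : ℕ) : ZMod n)
            + ((t / d ^ (k - 1 - (i : ℕ)) % d : ℕ) : ZMod n) := by
        conv_lhs => rw [hkey]
        push_cast
        ring
      rw [hz]
      push_cast
      ring
  · refine ⟨a, ?_⟩
    have hs : ∑ i : Fin k, ((a i : ℕ) : ZMod n) * (d : ZMod n) ^ (k - 1 - (i : ℕ))
        = ((t : ℕ) : ZMod n) := by
      conv_rhs => rw [← hsum]
      push_cast
      rw [Fin.sum_univ_eq_sum_range
        (fun i => ((t / d ^ (k - 1 - i) % d : ℕ) : ZMod n) * (d : ZMod n) ^ (k - 1 - i)) k,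
        ← Finset.sum_range_reflect
          (fun j => ((t / d ^ j % d : ℕ) : ZMod n) * (d : ZMod n) ^ j) k]
    rw [hs, hcast]
    ring
end
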